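/- arXiv:1704.04493 — 2 statements merged into one kernel-verified Lean document; each statement's English description precedes it below -/
import Mathlib

section
/- Let Lie(X) be the Lie subalgebra of the free associative algebra k⟨X⟩ generated by X under the bracket [u,v] = uv − vu. Then for every associative Lyndon-Shirshov word u on X, the Shirshov standard bracketing [u] ∈ Lie(X) has leading term u with coefficient 1 with respect to the deg-lex order on X*; that is, [u] = u + (a linear combination of words deg-lex smaller than u). -/
/-- The lexicographic order of the paper: the empty word is greater than any
nonempty word; otherwise compare letterwise.  `lexGT u v` means `u >_lex v`. -/
def lexGT {X : Type*} [LinearOrder X] : List X → List X → Prop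
  | [], [] => False
  | [], _ :: _ => True
  | _ :: _, [] => False
  | x :: u, y :: v => y < x ∨ (x = y ∧ lexGT u v)

section LexGT
variable {X : Type*} [LinearOrder X]

theorem lexGT_nil_cons {y : X} {v : List X} : lexGT ([] : List X) (y :: v) := trivial

theorem lexGT_cons_cons {x y : X} {u v : List X} :
    lexGT (x :: u) (y :: v) ↔ y < x ∨ (x = y ∧ lexGT u v) := Iff.rfl

theorem lexGT_nil (u : List X) : ¬ lexGT u [] := by cases u <;> simp [lexGT]

theorem lexGT_irrefl (u : List X) : ¬ lexGT u u := by
  induction u with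
  | nil => simp [lexGT]
  | cons x u ih => simp [lexGT]; exact ih

theorem lexGT_trans {a b c : List X} (h1 : lexGT a b) (h2 : lexGT b c) : lexGT a c := by
  induction a generalizing b c with
  | nil =>
    cases b with
    | nil => exact absurd h1 (lexGT_nil _)
    | cons y b =>
      cases c with
      | nil => exact absurd h2 (lexGT_nil _)
      | cons z c => exact lexGT_nil_cons
  | cons x a ih =>
    cases b with
    | nil => exact absurd h1 (lexGT_nil _)
    | cons y b =>
      cases c with
      | nil => exact absurd h2 (lexGT_nil _)
      | cons z c =>
        simp only [lexGT_cons_cons] at h1 h2 ⊢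
        rcases h1 with h1 | ⟨rfl, h1⟩
        · rcases h2 with h2 | ⟨rfl, h2⟩
          · exact Or.inl (h2.trans h1)
          · exact Or.inl h1
        · rcases h2 with h2 | ⟨rfl, h2⟩
          · exact Or.inl h2
          · exact Or.inr ⟨rfl, ih h1 h2⟩

theorem lexGT_asymm {a b : List X} (h1 : lexGT a b) (h2 : lexGT b a) : False :=
  lexGT_irrefl a (lexGT_trans h1 h2)

theorem lexGT_total (a b : List X) : a = b ∨ lexGT a b ∨ lexGT b a := by
  induction a generalizing b with
  | nil =>
    cases b with
    | nil => exact Or.inl rfl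
    | cons y b => exact Or.inr (Or.inl lexGT_nil_cons)
  | cons x a ih =>
    cases b with
    | nil => exact Or.inr (Or.inr lexGT_nil_cons)
    | cons y b =>
      rcases lt_trichotomy x y with h | rfl | h
      · exact Or.inr (Or.inr (lexGT_cons_cons.mpr (Or.inl h)))
      · rcases ih b with rfl | h | h
        · exact Or.inl rfl
        · exact Or.inr (Or.inl (lexGT_cons_cons.mpr (Or.inr ⟨rfl, h⟩)))
        · exact Or.inr (Or.inr (lexGT_cons_cons.mpr (Or.inr ⟨rfl, h⟩)))
      · exact Or.inr (Or.inl (lexGT_cons_cons.mpr (Or.inl h)))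

theorem lexGT_append_left {a b : List X} (s : List X) (h : lexGT a b) :
    lexGT (s ++ a) (s ++ b) := by
  induction s with
  | nil => simpa
  | cons x s ih =>
    rw [List.cons_append, List.cons_append]
    exact lexGT_cons_cons.mpr (Or.inr ⟨rfl, ih⟩)

theorem lexGT_of_append_left {s a b : List X} (h : lexGT (s ++ a) (s ++ b)) : lexGT a b := by
  induction s with
  | nil => simpa using h
  | cons x s ih =>
    simp only [List.cons_append, lexGT_cons_cons] at h
    rcases h with h | ⟨_, h⟩
    · exact absurd h (lt_irrefl x)
    · exact ih h

theorem lexGT_append_right {a b : List X} (h : lexGT a b) (c : List X) : lexGT a (b ++ c) := by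
  induction a generalizing b with
  | nil =>
    cases b with
    | nil => exact absurd h (lexGT_nil _)
    | cons y b => exact lexGT_nil_cons
  | cons x a ih =>
    cases b with
    | nil => exact absurd h (lexGT_nil _)
    | cons y b =>
      simp only [List.cons_append, lexGT_cons_cons] at h ⊢
      rcases h with h | ⟨rfl, h⟩
      · exact Or.inl h
      · exact Or.inr ⟨rfl, ih h⟩

theorem lexGT_prefix_or_strong {a b : List X} (h : lexGT a b) :
    a <+: b ∨ ∀ c d : List X, lexGT (a ++ c) (b ++ d) := by
  induction a generalizing b with
  | nil => exact Or.inl (List.nil_prefix)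
  | cons x a ih =>
    cases b with
    | nil => exact absurd h (lexGT_nil _)
    | cons y b =>
      simp only [lexGT_cons_cons] at h
      rcases h with h | ⟨rfl, h⟩
      · exact Or.inr fun c d => lexGT_cons_cons.mpr (Or.inl h)
      · rcases ih h with hp | hs
        · exact Or.inl (List.cons_prefix_cons.mpr ⟨rfl, hp⟩)
        · exact Or.inr fun c d => lexGT_cons_cons.mpr (Or.inr ⟨rfl, hs c d⟩)

theorem not_lexGT_of_prefix {s t : List X} (ht : t ≠ []) : ¬ lexGT (s ++ t) s := by
  induction s with
  | nil =>
    cases t with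
    | nil => exact absurd rfl ht
    | cons x t => exact lexGT_nil _
  | cons x s ih =>
    intro h
    rw [List.cons_append] at h
    rcases lexGT_cons_cons.mp h with h | ⟨_, h⟩
    · exact lt_irrefl x h
    · exact ih h

theorem lexGT_append_elim {a s p : List X} (h : lexGT a (s ++ p)) : s <+: a ∨ lexGT a s := by
  induction s generalizing a with
  | nil => exact Or.inl (List.nil_prefix)
  | cons y s ih =>
    cases a with
    | nil => exact Or.inr lexGT_nil_cons
    | cons x a =>
      rw [List.cons_append, lexGT_cons_cons] at h
      rcases h with h | ⟨rfl, h⟩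
      · exact Or.inr (lexGT_cons_cons.mpr (Or.inl h))
      · rcases ih h with hp | hgt
        · exact Or.inl (List.cons_prefix_cons.mpr ⟨rfl, hp⟩)
        · exact Or.inr (lexGT_cons_cons.mpr (Or.inr ⟨rfl, hgt⟩))

theorem lexGT_right_cancel {p t c : List X} (hl : p.length = t.length)
    (h : lexGT (p ++ c) (t ++ c)) : lexGT p t := by
  induction p generalizing t with
  | nil =>
    cases t with
    | nil => exact absurd (by simpa using h) (lexGT_irrefl c)
    | cons y t => simp at hl
  | cons x p ih =>
    cases t with
    | nil => simp at hl
    | cons y t =>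
      simp only [List.cons_append, lexGT_cons_cons] at h ⊢
      rcases h with h | ⟨rfl, h⟩
      · exact Or.inl h
      · exact Or.inr ⟨rfl, ih (by simpa using hl) h⟩

end LexGT

/-- Associative Lyndon-Shirshov word: a nonempty word `w` such that
`w >_lex v ++ u` for every factorization `w = u ++ v` into nonempty words. -/
def ALSW {X : Type*} [LinearOrder X] (w : List X) : Prop :=
  w ≠ [] ∧ ∀ u v : List X, u ≠ [] → v ≠ [] → w = u ++ v → lexGT w (v ++ u)

section ALSWsec
variable {X : Type*} [LinearOrder X]

theorem alsw_unbordered {u s t p : List X} (hu : ALSW u) (h1 : u = s ++ t) (h2 : u = p ++ s)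
    (hs : s ≠ []) (ht : t ≠ []) : False := by
  have hp : p ≠ [] := by
    rintro rfl
    rw [List.nil_append] at h2
    subst h2
    exact ht (by simpa using h1.symm)
  have e1 := hu.2 s t hs ht h1
  have e2 := hu.2 p s hp hs h2
  rw [h1] at e2
  have e2' : lexGT t p := lexGT_of_append_left e2
  rw [h2] at e1
  have hlen : p.length = t.length := by
    have := congrArg List.length (h1.symm.trans h2)
    simp at this; omega
  have e1' : lexGT p t := lexGT_right_cancel hlen e1
  exact lexGT_asymm e1' e2'

theorem alsw_suffix_gt {u p s : List X} (hu : ALSW u) (h : u = p ++ s) (hp : p ≠ [])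
    (hs : s ≠ []) : lexGT u s := by
  have e := hu.2 p s hp hs h
  rcases lexGT_append_elim e with hpre | hgt
  · obtain ⟨t, ht⟩ := hpre
    have htne : t ≠ [] := by
      rintro rfl
      rw [List.append_nil] at ht
      subst ht
      exact hp (by simpa using h)
    exact absurd (alsw_unbordered hu ht.symm h hs htne) id
  · exact hgt

theorem alsw_of_suffix_gt {v : List X} (hv : v ≠ [])
    (h : ∀ p s : List X, v = p ++ s → p ≠ [] → s ≠ [] → lexGT v s) : ALSW v :=
  ⟨hv, fun p s hp hs hfac => lexGT_append_right (h p s hfac hp hs) p⟩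

theorem prefix_alsw {v w : List X} (hu : ALSW (v ++ w)) (hv : v ≠ []) (hw : w ≠ [])
    (hwA : ALSW w)
    (hmax : ∀ v' w' : List X, v ++ w = v' ++ w' → v' ≠ [] → w' ≠ [] → ALSW w' →
      w'.length ≤ w.length) : ALSW v := by
  have key : ∀ n : ℕ, ∀ p s : List X, v = p ++ s → p ≠ [] → s ≠ [] → s.length = n →
      lexGT v s := by
    intro n
    induction n using Nat.strong_induction_on with
    | _ n ih =>
      intro p s hfac hp hs hlen
      by_contra hvs
      -- s is shorter than v
      have hslt : s.length < v.length := by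
        rw [hfac]; simp
        cases p with
        | nil => exact absurd rfl hp
        | cons a b => simp
      have hsv : lexGT s v := by
        rcases lexGT_total v s with heq | h | h
        · rw [heq] at hslt; omega
        · exact absurd h hvs
        · exact h
      -- u > s ++ w since s++w is a proper suffix of u
      have husw : lexGT (v ++ w) (s ++ w) := by
        apply alsw_suffix_gt hu _ hp (by simp [hs])
        rw [hfac, List.append_assoc]
      rcases lexGT_prefix_or_strong hsv with hpre | hstrong
      · -- s is a prefix of v : v = s ++ t
        obtain ⟨t, ht⟩ := hpre
        have htne : t ≠ [] := by
          rintro rfl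
          rw [List.append_nil] at ht
          rw [ht] at hslt
          omega
        -- claim1 : lexGT (s ++ w) w
        have hnotwprefix : ∀ q : List X, v = w ++ q → False := by
          intro q hq
          have h1 : lexGT (v ++ w) w := alsw_suffix_gt hu rfl hv hw
          have h2 : ¬ lexGT (v ++ w) w := by
            rw [hq, List.append_assoc]
            exact not_lexGT_of_prefix (by simp [hw])
          exact h2 h1
        have claim1 : lexGT (s ++ w) w := by
          rcases lexGT_total s w with heq | hsw | hws
          · exact absurd (hnotwprefix t (by rw [← ht, heq])) id
          · rcases lexGT_prefix_or_strong hsw with hpre2 | hstr2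
            · obtain ⟨q, hq⟩ := hpre2
              cases q with
              | nil =>
                rw [List.append_nil] at hq
                exact absurd (hnotwprefix t (by rw [← ht, hq])) id
              | cons c q' =>
                have hwq : lexGT w (c :: q') := alsw_suffix_gt hwA hq.symm hs (by simp)
                have := lexGT_append_left s hwq
                rwa [hq] at this
            · have := hstr2 w []
              rwa [List.append_nil] at this
          · rcases lexGT_prefix_or_strong hws with hpre3 | hstr3
            · obtain ⟨q, hq⟩ := hpre3
              exact absurd (hnotwprefix (q ++ t) (by rw [← ht, ← hq, List.append_assoc])) id
            · have h1 := hstr3 [] (t ++ w)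
              rw [List.append_nil, ← List.append_assoc, ht] at h1
              exact absurd (lexGT_asymm h1 (alsw_suffix_gt hu rfl hv hw)) id
        -- ALSW (s ++ w)
        have hswA : ALSW (s ++ w) := by
          apply alsw_of_suffix_gt (by simp [hs])
          intro a b hab ha hb
          rcases List.append_eq_append_iff.mp hab.symm with ⟨a', ha1, ha2⟩ | ⟨c', hc1, hc2⟩
          · -- s = a ++ a', b = a' ++ w : the suffix of b comes from s
            cases a' with
            | nil => rw [ha2, List.nil_append]; exact claim1
            | cons c b'' =>
              set s' : List X := c :: b'' with hs'def
              have hs'ne : s' ≠ [] := by simp [hs'def]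
              have hs'lt : s'.length < n := by
                have h5 : s.length = a.length + s'.length := by rw [ha1]; simp
                have h6 : 0 < a.length := List.length_pos_iff.mpr ha
                omega
              have hs'suffv : v = (p ++ a) ++ s' := by
                rw [hfac, ha1, List.append_assoc]
              have hvs' : lexGT v s' := ih s'.length hs'lt (p ++ a) s' hs'suffv
                (by simp [hp]) hs'ne rfl
              rw [ha2]
              rcases lexGT_total s s' with heq | h1 | h1
              · have h7 : s.length = s'.length := by rw [heq]
                omega
              · rcases lexGT_prefix_or_strong h1 with hpre4 | hstr4
                · have := hpre4.length_le
                  omega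
                · exact hstr4 w w
              · rcases lexGT_prefix_or_strong h1 with hpre5 | hstr5
                · obtain ⟨q, hq⟩ := hpre5
                  have hqne : q ≠ [] := by
                    rintro rfl
                    rw [List.append_nil] at hq
                    have h8 : s'.length = s.length := by rw [hq]
                    omega
                  have h9 : ¬ lexGT v s' := by
                    rw [← ht, ← hq, List.append_assoc]
                    exact not_lexGT_of_prefix (by simp [hqne])
                  exact absurd hvs' h9
                · have h2 := hstr5 w (t ++ w)
                  rw [← List.append_assoc, ht] at h2
                  have h3 : lexGT (v ++ w) (s' ++ w) :=
                    alsw_suffix_gt (p := p ++ a) hu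
                      (by rw [hs'suffv, List.append_assoc]) (by simp [hp])
                      (by simp [hs'ne])
                  exact absurd (lexGT_asymm h2 h3) id
          · -- a = s ++ c', w = c' ++ b : b is a suffix of w
            cases c' with
            | nil => rw [List.nil_append] at hc2; rw [← hc2]; exact claim1
            | cons c a'' =>
              have h4 : lexGT w b := alsw_suffix_gt hwA hc2 (by simp) hb
              exact lexGT_trans claim1 h4
        -- contradiction with maximality
        have hc := hmax p (s ++ w) (by rw [hfac, List.append_assoc]) hp (by simp [hs]) hswA
        rw [List.length_append] at hc
        have := List.length_pos_iff.mpr hs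
        omega
      · -- strong case : lexGT (s ++ w) (v ++ w), contradiction with husw
        exact lexGT_asymm (hstrong w w) husw
  apply alsw_of_suffix_gt hv
  intro p s hfac hp hs
  exact key s.length p s hfac hp hs rfl

end ALSWsec

/-- `u` is deg-lex smaller than `v`: shorter, or of the same length and
lexicographically smaller. -/
def degLexLT {X : Type*} [LinearOrder X] (u v : List X) : Prop :=
  u.length < v.length ∨ (u.length = v.length ∧ List.Lex (· < ·) u v)

section DegLex
variable {X : Type*} [LinearOrder X]

theorem lex_of_lexGT {a b : List X} (hl : a.length = b.length) (h : lexGT a b) :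
    List.Lex (· < ·) b a := by
  induction a generalizing b with
  | nil =>
    cases b with
    | nil => exact absurd h (lexGT_irrefl _)
    | cons y b => simp at hl
  | cons x a ih =>
    cases b with
    | nil => simp at hl
    | cons y b =>
      rcases lexGT_cons_cons.mp h with hr | ⟨rfl, hr⟩
      · exact List.Lex.rel hr
      · exact List.Lex.cons (ih (by simpa using hl) hr)

theorem lex_append_left' {c d : List X} (h : List.Lex (· < ·) c d) (w : List X) :
    List.Lex (· < ·) (w ++ c) (w ++ d) := by
  induction w with
  | nil => simpa
  | cons x w ih => exact List.Lex.cons ih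

theorem lex_append_of_ne {a b : List X} (hl : a.length = b.length)
    (h : List.Lex (· < ·) a b) (c d : List X) : List.Lex (· < ·) (a ++ c) (b ++ d) := by
  induction a generalizing b with
  | nil =>
    cases b with
    | nil => cases h
    | cons y b => simp at hl
  | cons x a ih =>
    cases b with
    | nil => simp at hl
    | cons y b =>
      cases h with
      | rel h => exact List.Lex.rel h
      | cons h => exact List.Lex.cons (ih (by simpa using hl) h)

theorem lex_irrefl' (a : List X) : ¬ List.Lex (· < ·) a a := by
  induction a with
  | nil => intro h; cases h
  | cons x a ih =>
    intro h
    cases h with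
    | rel h => exact lt_irrefl x h
    | cons h => exact ih h

theorem lex_trans' {a b c : List X} (h1 : List.Lex (· < ·) a b) (h2 : List.Lex (· < ·) b c) :
    List.Lex (· < ·) a c := by
  induction a generalizing b c with
  | nil =>
    cases c with
    | nil => cases h2
    | cons z c => exact List.Lex.nil
  | cons x a ih =>
    cases b with
    | nil => cases h1
    | cons y b =>
      cases c with
      | nil => cases h2
      | cons z c =>
        cases h1 with
        | rel h =>
          cases h2 with
          | rel h' => exact List.Lex.rel (h.trans h')
          | cons h' => exact List.Lex.rel h
        | cons h =>
          cases h2 with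
          | rel h' => exact List.Lex.rel h'
          | cons h' => exact List.Lex.cons (ih h h')

theorem degLexLT_trans {a b c : List X} (h1 : degLexLT a b) (h2 : degLexLT b c) :
    degLexLT a c := by
  rcases h1 with h1 | ⟨h1, hx1⟩
  · rcases h2 with h2 | ⟨h2, _⟩
    · exact Or.inl (h1.trans h2)
    · exact Or.inl (h2 ▸ h1)
  · rcases h2 with h2 | ⟨h2, hx2⟩
    · exact Or.inl (h1 ▸ h2)
    · exact Or.inr ⟨h1.trans h2, lex_trans' hx1 hx2⟩

theorem dl_append {a b c d : List X} (h1 : degLexLT a c ∨ a = c) (h2 : degLexLT b d ∨ b = d) :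
    degLexLT (a ++ b) (c ++ d) ∨ (a = c ∧ b = d) := by
  have hbl : b.length ≤ d.length := by
    rcases h2 with h2 | rfl
    · rcases h2 with h2 | ⟨h2, _⟩ <;> omega
    · exact le_refl _
  rcases h1 with h1 | rfl
  · rcases h1 with h1 | ⟨h1, hx1⟩
    · left; left; simp only [List.length_append]; omega
    · left
      have hbd : b.length < d.length ∨ b.length = d.length := by omega
      rcases hbd with hbd | hbd
      · left; simp only [List.length_append]; omega
      · right
        exact ⟨by simp only [List.length_append]; omega, lex_append_of_ne h1 hx1 b d⟩
  · rcases h2 with h2 | rfl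
    · rcases h2 with h2 | ⟨h2, hx2⟩
      · left; left; simp only [List.length_append]; omega
      · left; right
        exact ⟨by simp only [List.length_append]; omega, lex_append_left' hx2 a⟩
    · right; exact ⟨rfl, rfl⟩

theorem dl_append_left_strict {a b c d : List X} (h1 : degLexLT a c)
    (h2 : degLexLT b d ∨ b = d) : degLexLT (a ++ b) (c ++ d) := by
  rcases dl_append (Or.inl h1) h2 with h | ⟨rfl, rfl⟩
  · exact h
  · rcases h1 with h1 | ⟨_, hx⟩
    · omega
    · exact absurd hx (lex_irrefl' a)

theorem dl_append_right_strict {a b c d : List X} (h1 : degLexLT a c ∨ a = c)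
    (h2 : degLexLT b d) : degLexLT (a ++ b) (c ++ d) := by
  rcases dl_append h1 (Or.inl h2) with h | ⟨rfl, rfl⟩
  · exact h
  · rcases h2 with h2 | ⟨_, hx⟩
    · omega
    · exact absurd hx (lex_irrefl' b)

end DegLex

/-- The Shirshov standard bracketing, as a relation between an associative
Lyndon-Shirshov word and the corresponding element of the free associative
algebra `k⟨X⟩ = MonoidAlgebra k (FreeMonoid X)`: a single letter brackets to
itself, and a word of length ≥ 2 brackets as `[[v],[w]]` where `w` is the
longest proper Lyndon-Shirshov suffix. -/
inductive SB (k : Type*) [Field k] (X : Type*) [LinearOrder X] :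
    List X → MonoidAlgebra k (FreeMonoid X) → Prop
  | letter (x : X) : SB k X [x] (MonoidAlgebra.single (FreeMonoid.ofList [x]) 1)
  | node (v w : List X) (f g : MonoidAlgebra k (FreeMonoid X)) :
      v ≠ [] → w ≠ [] → ALSW w →
      (∀ v' w' : List X, v ++ w = v' ++ w' → v' ≠ [] → w' ≠ [] → ALSW w' →
        w'.length ≤ w.length) →
      SB k X v f → SB k X w g → SB k X (v ++ w) (f * g - g * f)

section MainAux
variable {k : Type*} [Field k] {X : Type*} [LinearOrder X]

theorem mul_support_bound {x y : MonoidAlgebra k (FreeMonoid X)} {a b : List X}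
    (hx : ∀ m ∈ x.coeff.support, degLexLT (FreeMonoid.toList m) a ∨ FreeMonoid.toList m = a)
    (hy : ∀ m ∈ y.coeff.support, degLexLT (FreeMonoid.toList m) b ∨ FreeMonoid.toList m = b)
    (hstrict : (∀ m ∈ x.coeff.support, degLexLT (FreeMonoid.toList m) a) ∨
      (∀ m ∈ y.coeff.support, degLexLT (FreeMonoid.toList m) b)) :
    ∀ m ∈ (x * y).coeff.support, degLexLT (FreeMonoid.toList m) (a ++ b) := by
  classical
  intro m hm
  obtain ⟨y1, hy1, z1, hz1, rfl⟩ := Finset.mem_mul.mp (MonoidAlgebra.support_coeff_mul_subset x y hm)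
  rw [FreeMonoid.toList_mul]
  rcases hstrict with hst | hst
  · exact dl_append_left_strict (hst y1 hy1) (hy z1 hz1)
  · exact dl_append_right_strict (hx y1 hy1) (hst z1 hz1)

omit [LinearOrder X] in
theorem single_support_eq (a : List X) :
    ∀ m ∈ (MonoidAlgebra.single (FreeMonoid.ofList a) (1 : k)).coeff.support,
      FreeMonoid.toList m = a := by
  intro m hm
  have h := Finsupp.support_single_subset hm
  rw [Finset.mem_singleton] at h
  rw [h]
  rfl

end MainAux


/-- the Shirshov standard bracketing of an associative
Lyndon-Shirshov word `u` equals `u` plus a linear combination of deg-lex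
smaller words. -/
theorem shirshov_bracketing_leading_term
    (k : Type*) [Field k] (X : Type*) [LinearOrder X] [WellFoundedLT X]
    (u : List X) (f : MonoidAlgebra k (FreeMonoid X))
    (hu : ALSW u) (hf : SB k X u f) :
    ∃ r : MonoidAlgebra k (FreeMonoid X),
      f = MonoidAlgebra.single (FreeMonoid.ofList u) 1 + r ∧
      ∀ m ∈ r.coeff.support, degLexLT (FreeMonoid.toList m) u := by
  classical
  revert hu
  induction hf with
  | letter x => exact fun _ => ⟨0, (add_zero _).symm, by simp⟩
  | node v w f g hv hw hwA hmax hfv hgw ihf ihg =>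
    intro hA
    have hvA : ALSW v := prefix_alsw hA hv hw hwA hmax
    obtain ⟨rv, hfe, hfs⟩ := ihf hvA
    obtain ⟨rw', hge, hgs⟩ := ihg hwA
    have e1 : (MonoidAlgebra.single (FreeMonoid.ofList v) (1 : k)) *
        (MonoidAlgebra.single (FreeMonoid.ofList w) (1 : k)) =
        MonoidAlgebra.single (FreeMonoid.ofList (v ++ w)) (1 : k) := by
      rw [MonoidAlgebra.single_mul_single, one_mul, ← FreeMonoid.ofList_append]
    have e2 : (MonoidAlgebra.single (FreeMonoid.ofList w) (1 : k)) *
        (MonoidAlgebra.single (FreeMonoid.ofList v) (1 : k)) =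
        MonoidAlgebra.single (FreeMonoid.ofList (w ++ v)) (1 : k) := by
      rw [MonoidAlgebra.single_mul_single, one_mul, ← FreeMonoid.ofList_append]
    refine ⟨f * g - g * f - MonoidAlgebra.single (FreeMonoid.ofList (v ++ w)) 1, by abel, ?_⟩
    have hWV : degLexLT (w ++ v) (v ++ w) :=
      Or.inr ⟨by simp [List.length_append, Nat.add_comm],
        lex_of_lexGT (by simp [List.length_append, Nat.add_comm])
          (hA.2 v w hv hw rfl)⟩
    have hrepr : f * g - g * f - MonoidAlgebra.single (FreeMonoid.ofList (v ++ w)) (1 : k) =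
        (MonoidAlgebra.single (FreeMonoid.ofList v) (1 : k)) * rw' +
        rv * (MonoidAlgebra.single (FreeMonoid.ofList w) (1 : k)) +
        rv * rw' -
        (MonoidAlgebra.single (FreeMonoid.ofList w) (1 : k)) *
          (MonoidAlgebra.single (FreeMonoid.ofList v) (1 : k)) -
        (MonoidAlgebra.single (FreeMonoid.ofList w) (1 : k)) * rv -
        rw' * (MonoidAlgebra.single (FreeMonoid.ofList v) (1 : k)) -
        rw' * rv := by
      rw [hfe, hge, ← e1]
      noncomm_ring
    intro m hm
    rw [hrepr] at hm
    have hsvLE : ∀ m ∈ (MonoidAlgebra.single (FreeMonoid.ofList v) (1 : k)).coeff.support,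
        degLexLT (FreeMonoid.toList m) v ∨ FreeMonoid.toList m = v :=
      fun m hm => Or.inr (single_support_eq v m hm)
    have hswLE : ∀ m ∈ (MonoidAlgebra.single (FreeMonoid.ofList w) (1 : k)).coeff.support,
        degLexLT (FreeMonoid.toList m) w ∨ FreeMonoid.toList m = w :=
      fun m hm => Or.inr (single_support_eq w m hm)
    have hrvLE : ∀ m ∈ rv.coeff.support,
        degLexLT (FreeMonoid.toList m) v ∨ FreeMonoid.toList m = v :=
      fun m hm => Or.inl (hfs m hm)
    have hrwLE : ∀ m ∈ rw'.coeff.support,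
        degLexLT (FreeMonoid.toList m) w ∨ FreeMonoid.toList m = w :=
      fun m hm => Or.inl (hgs m hm)
    rcases Finset.mem_union.mp (Finsupp.support_sub hm) with hm | hm
    rotate_left
    · -- rw' * rv
      exact degLexLT_trans (mul_support_bound hrwLE hrvLE (Or.inl hgs) m hm) hWV
    rcases Finset.mem_union.mp (Finsupp.support_sub hm) with hm | hm
    rotate_left
    · -- rw' * sv
      exact degLexLT_trans (mul_support_bound hrwLE hsvLE (Or.inl hgs) m hm) hWV
    rcases Finset.mem_union.mp (Finsupp.support_sub hm) with hm | hm
    rotate_left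
    · -- sw * rv
      exact degLexLT_trans (mul_support_bound hswLE hrvLE (Or.inr hfs) m hm) hWV
    rcases Finset.mem_union.mp (Finsupp.support_sub hm) with hm | hm
    rotate_left
    · -- sw * sv
      rw [e2] at hm
      rw [single_support_eq (w ++ v) m hm]
      exact hWV
    rcases Finset.mem_union.mp (Finsupp.support_add hm) with hm | hm
    rotate_left
    · -- rv * rw'
      exact mul_support_bound hrvLE hrwLE (Or.inl hfs) m hm
    rcases Finset.mem_union.mp (Finsupp.support_add hm) with hm | hm
    · -- sv * rw'
      exact mul_support_bound hsvLE hrwLE (Or.inr hgs) m hm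
    · -- rv * sw
      exact mul_support_bound hrvLE hswLE (Or.inl hfs) m hm
end

section
/- Let R be a λ-differential associative algebra with λ = 0 (i.e., D is an ordinary derivation) and u = u₁u₂⋯uₙ a product of prime differential words in the free differential algebra on X. Then with respect to the deg-lex order, the leading term of Dⁱ(u) is Dⁱ(u₁)u₂⋯uₙ and the leading coefficient is 1. -/
/-- The free λ-differential associative algebra on `X`: prime differential
words `Dᵐ(x)` are encoded as pairs `(m, x) : ℕ × X`, differential words are
words on the primes, and the algebra is the monoid algebra on these words. -/
abbrev DA (k : Type*) [Field k] (X : Type*) : Type _ :=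
  MonoidAlgebra k (FreeMonoid (ℕ × X))

/-- The value of the differential operator on a basis word, defined via
`D(ab) = D(a)b + aD(b) + λ D(a)D(b)` and `D(Dᵐ(x)) = Dᵐ⁺¹(x)`. -/
noncomputable def Dword (k : Type*) [Field k] {X : Type*} (lam : k) :
    List (ℕ × X) → DA k X
  | [] => 0
  | (m, x) :: rest =>
      MonoidAlgebra.single (FreeMonoid.ofList [(m + 1, x)]) 1 *
          MonoidAlgebra.single (FreeMonoid.ofList rest) 1
        + MonoidAlgebra.single (FreeMonoid.ofList [(m, x)]) 1 * Dword k lam rest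
        + lam • (MonoidAlgebra.single (FreeMonoid.ofList [(m + 1, x)]) 1 *
            Dword k lam rest)

/-- The differential operator of weight λ on the free differential algebra,
extended linearly from its values on basis words. -/
noncomputable def Dop (k : Type*) [Field k] {X : Type*} (lam : k) :
    DA k X →ₗ[k] DA k X :=
  Finsupp.linearCombination k (fun w : FreeMonoid (ℕ × X) =>
    Dword k lam (FreeMonoid.toList w)) ∘ₗ
    (MonoidAlgebra.coeffLinearEquiv k).toLinearMap

/-- Degree of a differential word: total number of occurrences of generators
and of `D`. -/
def degDW {X : Type*} (u : List (ℕ × X)) : ℕ := (u.map fun p => p.1 + 1).sum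

/-- The deg-lex order on differential words: compare degree, then breadth
(length), then the prime factors lexicographically (primes `Dᵐ(x)` being
compared by degree and then by generator). -/
def ltDl {X : Type*} [LinearOrder X] (u v : List (ℕ × X)) : Prop :=
  degDW u < degDW v ∨ (degDW u = degDW v ∧
    (u.length < v.length ∨ (u.length = v.length ∧
      List.Lex (Prod.Lex (· < ·) (· < ·)) u v)))

section Aux

variable {k : Type*} [Field k] {X : Type*}

lemma single_one_mul_eq_mapDomain (a : FreeMonoid (ℕ × X)) (f : DA k X) :
    (MonoidAlgebra.single a (1 : k) * f).coeff = Finsupp.mapDomain (a * ·) f.coeff := by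
  rw [MonoidAlgebra.mul_def, Finsupp.mapDomain]
  rw [MonoidAlgebra.coeff_single, Finsupp.sum_single_index]
  · simp [Finsupp.sum, MonoidAlgebra.coeff_sum]
  · simp

lemma Dword_zero_cons (m : ℕ) (x : X) (rest : List (ℕ × X)) :
    Dword k (0 : k) ((m, x) :: rest) =
      MonoidAlgebra.single (FreeMonoid.ofList ((m + 1, x) :: rest)) 1
        + MonoidAlgebra.single (FreeMonoid.ofList [(m, x)]) 1 * Dword k 0 rest := by
  rw [Dword]
  rw [MonoidAlgebra.single_mul_single, zero_smul, add_zero, one_mul]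
  congr 2

lemma Dword_deg_len (u : List (ℕ × X)) :
    ∀ w ∈ (Dword k (0 : k) u).coeff.support,
      degDW (FreeMonoid.toList w) = degDW u + 1 ∧
        (FreeMonoid.toList w).length = u.length := by
  induction u with
  | nil => simp [Dword]
  | cons a rest ih =>
    obtain ⟨m, x⟩ := a
    intro w hw
    classical
    rw [Dword_zero_cons] at hw
    have := Finsupp.support_add hw
    rw [Finset.mem_union] at this
    rcases this with h | h
    · have hw' : w = FreeMonoid.ofList ((m + 1, x) :: rest) :=
        Finset.mem_singleton.1 (Finsupp.support_single_subset h)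
      subst hw'
      constructor
      · simp [FreeMonoid.toList_ofList, degDW]
        try ring
      · simp [FreeMonoid.toList_ofList]
    · change w ∈ (_ * _ : DA k X).coeff.support at h
      rw [single_one_mul_eq_mapDomain] at h
      obtain ⟨w', hw', rfl⟩ := Finset.mem_image.1 (Finsupp.mapDomain_support h)
      obtain ⟨hd, hl⟩ := ih w' hw'
      have htl : FreeMonoid.toList (FreeMonoid.ofList [(m, x)] * w')
          = (m, x) :: FreeMonoid.toList w' := rfl
      rw [htl]
      constructor
      · simp [degDW] at hd ⊢
        omega
      · simp [hl]

lemma Dword_head (m : ℕ) (x : X) (rest : List (ℕ × X)) :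
    ∀ w ∈ (Dword k (0 : k) ((m, x) :: rest)).coeff.support,
      ∃ j t, j ≤ m + 1 ∧ FreeMonoid.toList w = (j, x) :: t ∧
        degDW ((j, x) :: t) = degDW ((m, x) :: rest) + 1 ∧
        t.length = rest.length := by
  intro w hw
  classical
  rw [Dword_zero_cons] at hw
  have := Finsupp.support_add hw
  rw [Finset.mem_union] at this
  rcases this with h | h
  · have hw' : w = FreeMonoid.ofList ((m + 1, x) :: rest) :=
      Finset.mem_singleton.1 (Finsupp.support_single_subset h)
    subst hw'
    refine ⟨m + 1, rest, le_refl _, rfl, ?_, rfl⟩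
    simp [degDW]
    try ring
  · change w ∈ (_ * _ : DA k X).coeff.support at h
    rw [single_one_mul_eq_mapDomain] at h
    obtain ⟨w', hw', rfl⟩ := Finset.mem_image.1 (Finsupp.mapDomain_support h)
    obtain ⟨hd, hl⟩ := Dword_deg_len rest w' hw'
    refine ⟨m, FreeMonoid.toList w', by omega, rfl, ?_, hl⟩
    simp [degDW] at hd ⊢
    omega

lemma Dop_single (lam : k) (w : FreeMonoid (ℕ × X)) :
    Dop k lam (MonoidAlgebra.single w 1) = Dword k lam (FreeMonoid.toList w) := by
  rw [Dop, LinearMap.comp_apply]; erw [Finsupp.linearCombination_single]; rw [one_smul]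

lemma Dop_support (r : DA k X) :
    ∀ w ∈ (Dop k (0 : k) r).coeff.support,
      ∃ w' ∈ r.coeff.support, w ∈ (Dword k (0 : k) (FreeMonoid.toList w')).coeff.support := by
  intro w hw
  classical
  rw [Dop, LinearMap.comp_apply] at hw; erw [Finsupp.linearCombination_apply] at hw
  rw [Finsupp.sum, MonoidAlgebra.coeff_sum] at hw
  obtain ⟨w', hw', hmem⟩ := Finset.mem_biUnion.1 (Finsupp.support_finsetSum hw)
  exact ⟨w', hw', Finsupp.support_smul hmem⟩

end Aux

/-- for λ = 0 (an ordinary derivation), the leading term of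
`Dⁱ(u₁u₂⋯uₙ)` is `Dⁱ(u₁)u₂⋯uₙ` with leading coefficient `1`. -/
theorem leading_term_D_pow_zero
    (k : Type*) [Field k] (X : Type*) [LinearOrder X]
    (p : ℕ × X) (rest : List (ℕ × X)) (i : ℕ) :
    ∃ r : DA k X,
      (Dop k (0 : k) ^ i)
          (MonoidAlgebra.single (FreeMonoid.ofList (p :: rest)) 1) =
          MonoidAlgebra.single
            (FreeMonoid.ofList ((p.1 + i, p.2) :: rest)) 1 + r ∧
      ∀ m ∈ r.coeff.support,
        ltDl (FreeMonoid.toList m) ((p.1 + i, p.2) :: rest) := by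
  obtain ⟨p1, p2⟩ := p
  -- strengthened induction
  suffices H : ∀ i : ℕ, ∃ r : DA k X,
      (Dop k (0 : k) ^ i)
          (MonoidAlgebra.single (FreeMonoid.ofList ((p1, p2) :: rest)) 1) =
          MonoidAlgebra.single
            (FreeMonoid.ofList ((p1 + i, p2) :: rest)) 1 + r ∧
      ∀ w ∈ r.coeff.support, ∃ j t, j < p1 + i ∧
        FreeMonoid.toList w = (j, p2) :: t ∧
        degDW ((j, p2) :: t) = degDW ((p1, p2) :: rest) + i ∧
        t.length = rest.length by
    obtain ⟨r, hr, hsupp⟩ := H i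
    refine ⟨r, hr, ?_⟩
    intro w hw
    obtain ⟨j, t, hj, hwt, hdeg, hlen⟩ := hsupp w hw
    rw [hwt]
    right
    constructor
    · rw [hdeg]; simp [degDW]; try ring
    · right
      constructor
      · simp [hlen]
      · exact List.Lex.rel (Prod.Lex.left _ _ hj)
  clear i
  intro i
  induction i with
  | zero =>
    refine ⟨0, by simp, by simp⟩
  | succ i ih =>
    obtain ⟨r, hr, hsupp⟩ := ih
    have hpow : (Dop k (0 : k) ^ (i + 1))
        (MonoidAlgebra.single (FreeMonoid.ofList ((p1, p2) :: rest)) 1) =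
        Dop k (0 : k) ((Dop k (0 : k) ^ i)
          (MonoidAlgebra.single (FreeMonoid.ofList ((p1, p2) :: rest)) 1)) := by
      rw [pow_succ']; rfl
    rw [hpow, hr, map_add, Dop_single, FreeMonoid.toList_ofList, Dword_zero_cons]
    refine ⟨MonoidAlgebra.single (FreeMonoid.ofList [(p1 + i, p2)]) 1 *
        Dword k 0 rest + Dop k (0 : k) r, by ring_nf; rw [add_assoc], ?_⟩
    intro w hw
    classical
    have := Finsupp.support_add hw
    rw [Finset.mem_union] at this
    rcases this with h | h
    · change w ∈ (_ * _ : DA k X).coeff.support at h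
      rw [single_one_mul_eq_mapDomain] at h
      obtain ⟨w', hw', rfl⟩ := Finset.mem_image.1 (Finsupp.mapDomain_support h)
      obtain ⟨hd, hl⟩ := Dword_deg_len rest w' hw'
      refine ⟨p1 + i, FreeMonoid.toList w', by omega, rfl, ?_, hl⟩
      simp [degDW] at hd ⊢
      omega
    · obtain ⟨w', hw', hmem⟩ := Dop_support r w h
      obtain ⟨j, t, hj, hwt, hdeg, hlen⟩ := hsupp w' hw'
      rw [hwt] at hmem
      obtain ⟨j', t', hj', hwt', hdeg', hlen'⟩ := Dword_head j p2 t w hmem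
      refine ⟨j', t', by omega, hwt', ?_, by omega⟩
      rw [hdeg']
      omega
end
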